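/- Under the listed assumptions, the triangle equation (bδσ) holds: for all objects A, C of 𝒜, b→_{A,⊤,C} = δ←_A ∧ σ→_C. -/
import Mathlib


open CategoryTheory

universe v u

/-- The data and assumptions of Section 2 of "Medial Commutativity":
a category `C` with a bifunctor `wedge`, a special object `top`,
medial commutativity arrows `cm` (natural in all four indices),
natural isomorphisms `δ` and `σ` with the unit object, and the equations
(ψc^m), (ψδ), (ψσ), (c^mc^m) and (VII). -/
structure MedialData (C : Type u) [Category.{v} C] where
  /-- the bifunctor `∧` on objects -/
  wedge : C → C → C
  /-- the bifunctor `∧` on arrows -/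
  whom : ∀ {A B X Y : C}, (A ⟶ B) → (X ⟶ Y) → (wedge A X ⟶ wedge B Y)
  /-- (bif 1) -/
  whom_id : ∀ (A B : C), whom (𝟙 A) (𝟙 B) = 𝟙 (wedge A B)
  /-- (bif 2) -/
  whom_comp : ∀ {A B B' X Y Y' : C} (f : A ⟶ B) (g : B ⟶ B') (h : X ⟶ Y) (k : Y ⟶ Y'),
      whom (f ≫ g) (h ≫ k) = whom f h ≫ whom g k
  /-- the special object `⊤` -/
  top : C
  /-- medial commutativity `c^m_{A,B,X,Y} : (A∧B)∧(X∧Y) ⟶ (A∧X)∧(B∧Y)` -/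
  cm : ∀ (A B X Y : C), wedge (wedge A B) (wedge X Y) ⟶ wedge (wedge A X) (wedge B Y)
  /-- (c^m nat) -/
  cm_natural : ∀ {A A' B B' X X' Y Y' : C}
      (f : A ⟶ A') (g : B ⟶ B') (h : X ⟶ X') (j : Y ⟶ Y'),
      cm A B X Y ≫ whom (whom f h) (whom g j) = whom (whom f g) (whom h j) ≫ cm A' B' X' Y'
  /-- `δ→_A : A∧⊤ ⟶ A` -/
  δto : ∀ (A : C), wedge A top ⟶ A
  /-- `δ←_A : A ⟶ A∧⊤` -/
  δfrom : ∀ (A : C), A ⟶ wedge A top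
  /-- naturality of `δ→` -/
  δto_natural : ∀ {A B : C} (f : A ⟶ B), whom f (𝟙 top) ≫ δto B = δto A ≫ f
  δto_δfrom : ∀ (A : C), δto A ≫ δfrom A = 𝟙 (wedge A top)
  δfrom_δto : ∀ (A : C), δfrom A ≫ δto A = 𝟙 A
  /-- `σ→_A : ⊤∧A ⟶ A` -/
  σto : ∀ (A : C), wedge top A ⟶ A
  /-- `σ←_A : A ⟶ ⊤∧A` -/
  σfrom : ∀ (A : C), A ⟶ wedge top A
  /-- naturality of `σ→` -/
  σto_natural : ∀ {A B : C} (f : A ⟶ B), whom (𝟙 top) f ≫ σto B = σto A ≫ f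
  σto_σfrom : ∀ (A : C), σto A ≫ σfrom A = 𝟙 (wedge top A)
  σfrom_σto : ∀ (A : C), σfrom A ≫ σto A = 𝟙 A
  /-- (ψc^m) -/
  psi_cm : ∀ (A₁ A₁' A₂ A₂' A₃ A₃' A₄ A₄' : C),
      cm (wedge A₁ A₁') (wedge A₂ A₂') (wedge A₃ A₃') (wedge A₄ A₄') ≫
        whom (cm A₁ A₁' A₃ A₃') (cm A₂ A₂' A₄ A₄') ≫
        cm (wedge A₁ A₃) (wedge A₁' A₃') (wedge A₂ A₄) (wedge A₂' A₄')
      =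
      whom (cm A₁ A₁' A₂ A₂') (cm A₃ A₃' A₄ A₄') ≫
        cm (wedge A₁ A₂) (wedge A₁' A₂') (wedge A₃ A₄) (wedge A₃' A₄') ≫
        whom (cm A₁ A₂ A₃ A₄) (cm A₁' A₂' A₃' A₄')
  /-- (ψδ) -/
  psi_δ : ∀ (A A' : C),
      δto (wedge A A') =
        whom (𝟙 (wedge A A')) (δfrom top) ≫ cm A A' top top ≫ whom (δto A) (δto A')
  /-- (ψσ) -/
  psi_σ : ∀ (A A' : C),
      σto (wedge A A') =
        whom (δfrom top) (𝟙 (wedge A A')) ≫ cm top top A A' ≫ whom (σto A) (σto A')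
  /-- (c^mc^m) -/
  cm_cm : ∀ (A B X Y : C), cm A B X Y ≫ cm A X B Y = 𝟙 (wedge (wedge A B) (wedge X Y))
  /-- (VII) -/
  δtop_eq_σtop : δto top = σto top

variable {C : Type u} [Category.{v} C]

/-- the associativity arrow `b→_{A,B,X} : A∧(B∧X) ⟶ (A∧B)∧X`. -/
def MedialData.bto (M : MedialData C) (A B X : C) :
    M.wedge A (M.wedge B X) ⟶ M.wedge (M.wedge A B) X :=
  M.whom (M.δfrom A) (𝟙 (M.wedge B X)) ≫ M.cm A M.top B X ≫
    M.whom (𝟙 (M.wedge A B)) (M.σto X)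

/-- the associativity arrow `b←_{A,B,X} : (A∧B)∧X ⟶ A∧(B∧X)`. -/
def MedialData.bfrom (M : MedialData C) (A B X : C) :
    M.wedge (M.wedge A B) X ⟶ M.wedge A (M.wedge B X) :=
  M.whom (𝟙 (M.wedge A B)) (M.σfrom X) ≫ M.cm A B M.top X ≫
    M.whom (M.δto A) (𝟙 (M.wedge B X))

/-- the commutativity arrow `c_{A,B} : A∧B ⟶ B∧A`. -/
def MedialData.cc (M : MedialData C) (A B : C) : M.wedge A B ⟶ M.wedge B A :=
  M.whom (M.σfrom A) (M.δfrom B) ≫ M.cm M.top A B M.top ≫ M.whom (M.σto B) (M.δto A)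

namespace MedialData

variable (M : MedialData C)

lemma whom_comp' {A B B' X Y Y' : C} (f : A ⟶ B) (g : B ⟶ B') (h : X ⟶ Y) (k : Y ⟶ Y') :
    M.whom f h ≫ M.whom g k = M.whom (f ≫ g) (h ≫ k) :=
  (M.whom_comp f g h k).symm

lemma whom_inv {A B X Y : C} (f : A ⟶ B) (f' : B ⟶ A) (g : X ⟶ Y) (g' : Y ⟶ X)
    (h1 : f ≫ f' = 𝟙 A) (h2 : g ≫ g' = 𝟙 X) :
    M.whom f g ≫ M.whom f' g' = 𝟙 (M.wedge A X) := by
  rw [M.whom_comp', h1, h2, M.whom_id]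

/-- `σ←_⊤ = δ←_⊤`, a consequence of (VII). -/
lemma σfrom_top_eq : M.σfrom M.top = M.δfrom M.top := by
  calc M.σfrom M.top = M.σfrom M.top ≫ (M.δto M.top ≫ M.δfrom M.top) := by
        rw [M.δto_δfrom, Category.comp_id]
    _ = (M.σfrom M.top ≫ M.σto M.top) ≫ M.δfrom M.top := by
        rw [M.δtop_eq_σtop, Category.assoc]
    _ = M.δfrom M.top := by rw [M.σfrom_σto, Category.id_comp]

/-- `δ→_A ∧ 1_⊤ = δ→_{A∧⊤}`. -/
lemma whom_δto (A : C) : M.whom (M.δto A) (𝟙 M.top) = M.δto (M.wedge A M.top) := by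
  have h := M.δto_natural (M.δto A)
  calc M.whom (M.δto A) (𝟙 M.top)
      = M.whom (M.δto A) (𝟙 M.top) ≫ (M.δto A ≫ M.δfrom A) := by
        rw [M.δto_δfrom, Category.comp_id]
    _ = (M.whom (M.δto A) (𝟙 M.top) ≫ M.δto A) ≫ M.δfrom A := by rw [Category.assoc]
    _ = (M.δto (M.wedge A M.top) ≫ M.δto A) ≫ M.δfrom A := by rw [h]
    _ = M.δto (M.wedge A M.top) ≫ (M.δto A ≫ M.δfrom A) := by rw [Category.assoc]
    _ = M.δto (M.wedge A M.top) := by rw [M.δto_δfrom, Category.comp_id]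

/-- `1_⊤ ∧ σ→_X = σ→_{⊤∧X}`. -/
lemma whom_σto (X : C) : M.whom (𝟙 M.top) (M.σto X) = M.σto (M.wedge M.top X) := by
  have h := M.σto_natural (M.σto X)
  calc M.whom (𝟙 M.top) (M.σto X)
      = M.whom (𝟙 M.top) (M.σto X) ≫ (M.σto X ≫ M.σfrom X) := by
        rw [M.σto_σfrom, Category.comp_id]
    _ = (M.whom (𝟙 M.top) (M.σto X) ≫ M.σto X) ≫ M.σfrom X := by rw [Category.assoc]
    _ = (M.σto (M.wedge M.top X) ≫ M.σto X) ≫ M.σfrom X := by rw [h]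
    _ = M.σto (M.wedge M.top X) ≫ (M.σto X ≫ M.σfrom X) := by rw [Category.assoc]
    _ = M.σto (M.wedge M.top X) := by rw [M.σto_σfrom, Category.comp_id]

/-- `c^m_{A,⊤,⊤,⊤} = 1`. -/
lemma cm_A_top (A : C) : M.cm A M.top M.top M.top = 𝟙 _ := by
  have h := M.psi_δ A M.top
  haveI ha : IsIso (M.whom (𝟙 (M.wedge A M.top)) (M.δfrom M.top)) :=
    ⟨M.whom (𝟙 (M.wedge A M.top)) (M.δto M.top),
      M.whom_inv _ _ _ _ (Category.id_comp _) (M.δfrom_δto _),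
      M.whom_inv _ _ _ _ (Category.id_comp _) (M.δto_δfrom _)⟩
  haveI hb : IsIso (M.whom (M.δto A) (M.δto M.top)) :=
    ⟨M.whom (M.δfrom A) (M.δfrom M.top),
      M.whom_inv _ _ _ _ (M.δto_δfrom _) (M.δto_δfrom _),
      M.whom_inv _ _ _ _ (M.δfrom_δto _) (M.δfrom_δto _)⟩
  have key : M.whom (𝟙 (M.wedge A M.top)) (M.δfrom M.top) ≫
      (M.cm A M.top M.top M.top ≫ M.whom (M.δto A) (M.δto M.top))
      = M.whom (𝟙 (M.wedge A M.top)) (M.δfrom M.top) ≫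
        (𝟙 (M.wedge (M.wedge A M.top) (M.wedge M.top M.top)) ≫
          M.whom (M.δto A) (M.δto M.top)) := by
    rw [Category.id_comp, ← h, M.whom_comp', Category.id_comp, M.δfrom_δto, M.whom_δto]
  have key2 := (cancel_epi (M.whom (𝟙 (M.wedge A M.top)) (M.δfrom M.top))).mp key
  exact (cancel_mono (M.whom (M.δto A) (M.δto M.top))).mp
    (by rw [Category.id_comp] at key2; exact key2.trans (Category.id_comp _).symm)

/-- `c^m_{⊤,⊤,⊤,X} = 1`. -/
lemma cm_top_X (X : C) : M.cm M.top M.top M.top X = 𝟙 _ := by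
  have h := M.psi_σ M.top X
  haveI ha : IsIso (M.whom (M.δfrom M.top) (𝟙 (M.wedge M.top X))) :=
    ⟨M.whom (M.δto M.top) (𝟙 (M.wedge M.top X)),
      M.whom_inv _ _ _ _ (M.δfrom_δto _) (Category.id_comp _),
      M.whom_inv _ _ _ _ (M.δto_δfrom _) (Category.id_comp _)⟩
  haveI hb : IsIso (M.whom (M.σto M.top) (M.σto X)) :=
    ⟨M.whom (M.σfrom M.top) (M.σfrom X),
      M.whom_inv _ _ _ _ (M.σto_σfrom _) (M.σto_σfrom _),
      M.whom_inv _ _ _ _ (M.σfrom_σto _) (M.σfrom_σto _)⟩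
  have key : M.whom (M.δfrom M.top) (𝟙 (M.wedge M.top X)) ≫
      (M.cm M.top M.top M.top X ≫ M.whom (M.σto M.top) (M.σto X))
      = M.whom (M.δfrom M.top) (𝟙 (M.wedge M.top X)) ≫
        (𝟙 (M.wedge (M.wedge M.top M.top) (M.wedge M.top X)) ≫
          M.whom (M.σto M.top) (M.σto X)) := by
    rw [Category.id_comp, ← h, M.whom_comp', Category.id_comp, ← M.δtop_eq_σtop,
      M.δfrom_δto, M.whom_σto]
  have key2 := (cancel_epi (M.whom (M.δfrom M.top) (𝟙 (M.wedge M.top X)))).mp key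
  exact (cancel_mono (M.whom (M.σto M.top) (M.σto X))).mp
    (by rw [Category.id_comp] at key2; exact key2.trans (Category.id_comp _).symm)

/-- `c^m_{A∧⊤,⊤∧⊤,⊤∧⊤,⊤∧X} = 1`, via (ψc^m) and (c^mc^m). -/
lemma cm_big (A X : C) :
    M.cm (M.wedge A M.top) (M.wedge M.top M.top) (M.wedge M.top M.top) (M.wedge M.top X)
      = 𝟙 _ := by
  have h := M.psi_cm A M.top M.top M.top M.top M.top M.top X
  rw [M.cm_A_top, M.cm_top_X, M.whom_id] at h
  simp only [Category.id_comp, Category.comp_id] at h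
  have h2 := M.cm_cm (M.wedge A M.top) (M.wedge M.top M.top) (M.wedge M.top M.top)
    (M.wedge M.top X)
  rw [h2] at h
  exact h.symm

/-- `c^m_{A∧⊤,⊤,⊤,⊤∧X} = 1`, by naturality from `cm_big`. -/
lemma cm_mid (A X : C) :
    M.cm (M.wedge A M.top) M.top M.top (M.wedge M.top X) = 𝟙 _ := by
  have h := M.cm_natural (𝟙 (M.wedge A M.top)) (M.δto M.top) (M.δto M.top)
    (𝟙 (M.wedge M.top X))
  rw [M.cm_big, Category.id_comp] at h
  haveI : IsIso (M.whom (M.whom (𝟙 (M.wedge A M.top)) (M.δto M.top))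
      (M.whom (M.δto M.top) (𝟙 (M.wedge M.top X)))) :=
    ⟨M.whom (M.whom (𝟙 (M.wedge A M.top)) (M.δfrom M.top))
        (M.whom (M.δfrom M.top) (𝟙 (M.wedge M.top X))),
      M.whom_inv _ _ _ _
        (M.whom_inv _ _ _ _ (Category.id_comp _) (M.δto_δfrom _))
        (M.whom_inv _ _ _ _ (M.δto_δfrom _) (Category.id_comp _)),
      M.whom_inv _ _ _ _
        (M.whom_inv _ _ _ _ (Category.id_comp _) (M.δfrom_δto _))
        (M.whom_inv _ _ _ _ (M.δfrom_δto _) (Category.id_comp _))⟩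
  have key : M.whom (M.whom (𝟙 (M.wedge A M.top)) (M.δto M.top))
        (M.whom (M.δto M.top) (𝟙 (M.wedge M.top X))) ≫
      M.cm (M.wedge A M.top) M.top M.top (M.wedge M.top X)
      = M.whom (M.whom (𝟙 (M.wedge A M.top)) (M.δto M.top))
          (M.whom (M.δto M.top) (𝟙 (M.wedge M.top X))) ≫
        𝟙 (M.wedge (M.wedge (M.wedge A M.top) M.top)
          (M.wedge M.top (M.wedge M.top X))) := by
    rw [Category.comp_id]; exact h.symm
  exact (cancel_epi _).mp key

/-- The key fact: `c^m_{A,⊤,⊤,X} = 1`. -/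
lemma cm_A_top_top_X (A X : C) : M.cm A M.top M.top X = 𝟙 _ := by
  have h := M.cm_natural (M.δto A) (𝟙 M.top) (𝟙 M.top) (M.σto X)
  rw [M.cm_mid, Category.id_comp] at h
  haveI : IsIso (M.whom (M.whom (M.δto A) (𝟙 M.top))
      (M.whom (𝟙 M.top) (M.σto X))) :=
    ⟨M.whom (M.whom (M.δfrom A) (𝟙 M.top)) (M.whom (𝟙 M.top) (M.σfrom X)),
      M.whom_inv _ _ _ _
        (M.whom_inv _ _ _ _ (M.δto_δfrom _) (Category.id_comp _))
        (M.whom_inv _ _ _ _ (Category.id_comp _) (M.σto_σfrom _)),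
      M.whom_inv _ _ _ _
        (M.whom_inv _ _ _ _ (M.δfrom_δto _) (Category.id_comp _))
        (M.whom_inv _ _ _ _ (Category.id_comp _) (M.σfrom_σto _))⟩
  have key : M.whom (M.whom (M.δto A) (𝟙 M.top)) (M.whom (𝟙 M.top) (M.σto X)) ≫
      M.cm A M.top M.top X
      = M.whom (M.whom (M.δto A) (𝟙 M.top)) (M.whom (𝟙 M.top) (M.σto X)) ≫
        𝟙 (M.wedge (M.wedge A M.top) (M.wedge M.top X)) := by
    rw [Category.comp_id]; exact h.symm
  exact (cancel_epi _).mp key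

end MedialData

/-- The triangle equation (bδσ). -/
theorem triangle_of_medial (M : MedialData C) (A X : C) :
    M.bto A M.top X = M.whom (M.δfrom A) (M.σto X) := by
  unfold MedialData.bto
  rw [M.cm_A_top_top_X, Category.id_comp, M.whom_comp', Category.comp_id, Category.id_comp]
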